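/- If n ≥ 3 is even and m ≥ 3, then Kₙ × K_m is type I, i.e., χ''(Kₙ × K_m) = (n−1)(m−1) + 1. -/

import Mathlib

open SimpleGraph

variable {V : Type*} {W : Type*}

/-- The direct (tensor) product of two simple graphs. -/
def tensorProd (G : SimpleGraph V) (H : SimpleGraph W) : SimpleGraph (V × W) where
  Adj a b := G.Adj a.1 b.1 ∧ H.Adj a.2 b.2
  symm := ⟨fun _ _ h => ⟨G.adj_symm h.1, H.adj_symm h.2⟩⟩
  loopless := ⟨fun a h => G.loopless.irrefl a.1 h.1⟩

instance tensorProd.adjDecidable (G : SimpleGraph V) (H : SimpleGraph W)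
    [DecidableRel G.Adj] [DecidableRel H.Adj] : DecidableRel (tensorProd G H).Adj :=
  fun _ _ => instDecidableAnd

/-- A proper edge colouring with `n` colours, given as a symmetric function on adjacent pairs. -/
def IsEdgeColoring (G : SimpleGraph V) (n : ℕ) (ce : V → V → Fin n) : Prop :=
  (∀ u v, G.Adj u v → ce u v = ce v u) ∧
  (∀ u v w, G.Adj u v → G.Adj u w → v ≠ w → ce u v ≠ ce u w)

/-- A proper total colouring with `n` colours. -/
def IsTotalColoring (G : SimpleGraph V) (n : ℕ) (cv : V → Fin n) (ce : V → V → Fin n) : Prop :=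
  (∀ u v, G.Adj u v → ce u v = ce v u) ∧
  (∀ u v, G.Adj u v → cv u ≠ cv v) ∧
  (∀ u v w, G.Adj u v → G.Adj u w → v ≠ w → ce u v ≠ ce u w) ∧
  (∀ u v, G.Adj u v → ce u v ≠ cv u ∧ ce u v ≠ cv v)

/-- The total chromatic number of a graph. -/
noncomputable def totalChromaticNumber (G : SimpleGraph V) : ℕ :=
  sInf {n | ∃ cv ce, IsTotalColoring G n cv ce}

/-- Adjacency of the crown graph. -/
def crownAdj {m : ℕ} : Fin m ⊕ Fin m → Fin m ⊕ Fin m → Prop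
  | Sum.inl k, Sum.inr t => k ≠ t
  | Sum.inr k, Sum.inl t => k ≠ t
  | _, _ => False

/-- The crown graph `J_{2m}`: `K_{m,m}` minus a perfect matching. -/
def crown (m : ℕ) : SimpleGraph (Fin m ⊕ Fin m) where
  Adj := crownAdj
  symm := by constructor; rintro (k|k) (t|t) h <;> simp only [crownAdj] at * <;> exact fun e => h e.symm
  loopless := by constructor; rintro (k|k) h <;> simp only [crownAdj] at h

instance crown.adjDecidable (m : ℕ) : DecidableRel (crown m).Adj := fun a b =>
  match a, b with
  | Sum.inl k, Sum.inr t => (inferInstance : Decidable (k ≠ t))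
  | Sum.inr k, Sum.inl t => (inferInstance : Decidable (k ≠ t))
  | Sum.inl _, Sum.inl _ => isFalse (fun h => h)
  | Sum.inr _, Sum.inr _ => isFalse (fun h => h)

/-!
A vertex of degree `Δ = (n - 1)(m - 1)` sees `Δ + 1` distinct colours, which gives the lower bound.

For the upper bound, colour the edges of `Kₙ` (`n` even) with `n - 1` classes by the round-robin
1-factorisation. The edges of `Kₙ × Kₘ` above a class form copies of `K₂ × Kₘ`. Class `0` and all
the vertices share `m` colours: the vertex `(i, a)` gets `a`, and the edge `(i, a) (j, b)` with
`i < j` gets `L a b` for an idempotent Latin square `L` of order `m`. Every other class needs only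
`m - 1` colours, `a - b ≠ 0`. In total this is `m + (n - 2)(m - 1) = Δ + 1` colours. For odd `m`,
`L a b = 2a - b` in `ZMod m` is an idempotent Latin square; for even `m` one prolongs it from order
`m - 1` along the transversal `b = a + 1`.
-/

open Function

structure IsLatinSquare {α : Type*} (L : α → α → α) : Prop where
  injective_right : ∀ a, Injective (L a)
  injective_left : ∀ b, Injective (L · b)

namespace IsLatinSquare

variable {α β : Type*} {L : α → α → α}

theorem ne_of_idempotent (hL : IsLatinSquare L) (hL₀ : ∀ a, L a a = a) {a b : α}
    (hab : a ≠ b) : L a b ≠ a ∧ L a b ≠ b :=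
  ⟨fun h => hab (hL.injective_right a (h.trans (hL₀ a).symm)).symm,
    fun h => hab (hL.injective_left b (h.trans (hL₀ b).symm))⟩

theorem equivCongr (hL : IsLatinSquare L) (e : α ≃ β) :
    IsLatinSquare fun x y => e (L (e.symm x) (e.symm y)) :=
  ⟨fun _ => e.injective.comp ((hL.injective_right _).comp e.symm.injective),
    fun _ => e.injective.comp ((hL.injective_left _).comp e.symm.injective)⟩

end IsLatinSquare

theorem isLatinSquare_sub {α : Type*} [AddGroup α] : IsLatinSquare fun a b : α => a - b :=
  ⟨fun _ => sub_right_injective, fun _ => sub_left_injective⟩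

theorem ZMod.isUnit_two_of_odd {q : ℕ} (hq : Odd q) : IsUnit (2 : ZMod q) := by
  exact_mod_cast (ZMod.isUnit_iff_coprime 2 q).2 (Nat.coprime_two_left.2 hq)

def ZMod.reflect (q : ℕ) (a b : ZMod q) : ZMod q := 2 * a - b

theorem ZMod.isLatinSquare_reflect {q : ℕ} (hq : Odd q) : IsLatinSquare (ZMod.reflect q) :=
  ⟨fun _ => sub_right_injective,
    fun _ _ _ h => (ZMod.isUnit_two_of_odd hq).mul_left_cancel (sub_left_injective h)⟩

theorem ZMod.reflect_self (q : ℕ) (a : ZMod q) : ZMod.reflect q a a = a := by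
  rw [ZMod.reflect, two_mul, add_sub_cancel_right]

/-- Prolongation of `L` along the transversal `{(a, τ a)}`: the transversal cells are emptied into
the new row and column `none`. -/
def prolong {α : Type*} [DecidableEq α] (L : α → α → α) (τ : Equiv.Perm α) :
    Option α → Option α → Option α
  | none, none => none
  | some a, none => some (L a (τ a))
  | none, some b => some (L (τ.symm b) b)
  | some a, some b => if b = τ a then none else some (L a b)

theorem isLatinSquare_prolong {α : Type*} [DecidableEq α] {L : α → α → α} (hL : IsLatinSquare L)
    {τ : Equiv.Perm α} (hτ : Injective fun a => L a (τ a)) : IsLatinSquare (prolong L τ) := by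
  constructor
  · rintro (_ | a) (_ | b) (_ | b') h <;> simp [prolong] at h ⊢
    · exact τ.symm.injective (hτ (by simpa using h))
    · exact h.1 (hL.injective_right a h.2).symm
    · exact h.1 (hL.injective_right a h.2)
    · split_ifs at h with hb hb'
      · exact hb.trans hb'.symm
      · exact hL.injective_right a (Option.some_injective _ h)
  · rintro (_ | b) (_ | a) (_ | a') h <;> simp [prolong] at h ⊢
    · exact hτ h
    · exact h.1 (by rw [← hL.injective_left b h.2, Equiv.apply_symm_apply])
    · exact h.1 (by rw [hL.injective_left b h.2, Equiv.apply_symm_apply])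
    · split_ifs at h with ha ha'
      · exact τ.injective (ha.symm.trans ha')
      · exact hL.injective_left b (Option.some_injective _ h)

theorem prolong_self {α : Type*} [DecidableEq α] {L : α → α → α} {τ : Equiv.Perm α}
    (hτ : ∀ a, τ a ≠ a) (hL₀ : ∀ a, L a a = a) (a : Option α) : prolong L τ a a = a := by
  cases a <;> simp [prolong, hL₀, (hτ _).symm]

theorem exists_idempotent_isLatinSquare_of_card_eq {α β : Type*} [Fintype α] [Fintype β]
    (hβ : Fintype.card β = Fintype.card α) {L : β → β → β} (hL : IsLatinSquare L)
    (hL₀ : ∀ b, L b b = b) : ∃ L : α → α → α, IsLatinSquare L ∧ ∀ a, L a a = a :=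
  ⟨_, hL.equivCongr (Fintype.equivOfCardEq hβ), fun a => by simp [hL₀]⟩

theorem exists_idempotent_isLatinSquare {α : Type*} [Fintype α] (h : 3 ≤ Fintype.card α) :
    ∃ L : α → α → α, IsLatinSquare L ∧ ∀ a, L a a = a := by
  rcases Nat.even_or_odd (Fintype.card α) with heven | hodd
  · set q := Fintype.card α - 1
    have hq : Odd q := by obtain ⟨r, hr⟩ := heven; exact ⟨r - 1, by omega⟩
    have : Fact (1 < q) := ⟨by omega⟩
    refine exists_idempotent_isLatinSquare_of_card_eq (β := Option (ZMod q))
      (by simp [ZMod.card]; omega)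
      (isLatinSquare_prolong (ZMod.isLatinSquare_reflect hq) (τ := Equiv.addRight 1) ?_)
      (prolong_self (fun a => by simp) (ZMod.reflect_self q))
    intro a b hab
    simpa [ZMod.reflect, two_mul] using hab
  · have : NeZero (Fintype.card α) := ⟨by omega⟩
    exact exists_idempotent_isLatinSquare_of_card_eq (β := ZMod (Fintype.card α)) (ZMod.card _)
      (ZMod.isLatinSquare_reflect hodd) (ZMod.reflect_self _)

/-- The round-robin 1-factorisation of `K_{q+1}`, with `none` the vertex at infinity. -/
def roundRobin {q : ℕ} : Option (ZMod q) → Option (ZMod q) → ZMod q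
  | some a, some b => a + b
  | some a, none => 2 * a
  | none, some b => 2 * b
  | none, none => 0

theorem roundRobin_comm {q : ℕ} (u v : Option (ZMod q)) : roundRobin u v = roundRobin v u := by
  cases u <;> cases v <;> simp [roundRobin, add_comm]

theorem eq_of_roundRobin_eq {q : ℕ} (hq : Odd q) {u v w : Option (ZMod q)} (hv : v ≠ u)
    (hw : w ≠ u) (h : roundRobin u v = roundRobin u w) : v = w := by
  rcases u with _ | a <;> rcases v with _ | b <;> rcases w with _ | c <;>
    simp only [roundRobin, ne_eq, reduceCtorEq, not_false_eq_true, not_true_eq_false,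
      Option.some.injEq] at hv hw h ⊢
  · exact (ZMod.isUnit_two_of_odd hq).mul_left_cancel h
  · exact hw (add_left_cancel (h.symm.trans (two_mul a)))
  · exact hv (add_left_cancel (h.trans (two_mul a)))
  · exact add_left_cancel h

theorem isEdgeColoring_roundRobin {q : ℕ} [NeZero q] (hq : Odd q) :
    IsEdgeColoring (⊤ : SimpleGraph (Option (ZMod q))) q
      fun u v => (ZMod.finEquiv q).symm (roundRobin u v) :=
  ⟨fun u v _ => congrArg _ (roundRobin_comm u v),
    fun _ _ _ huv huw hvw h => hvw (eq_of_roundRobin_eq hq (Ne.symm huv) (Ne.symm huw)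
      ((ZMod.finEquiv q).symm.injective h))⟩

theorem IsEdgeColoring.top_comp {α β : Type*} {k : ℕ} {ce : α → α → Fin k}
    (h : IsEdgeColoring (⊤ : SimpleGraph α) k ce) {f : β → α} (hf : Injective f) :
    IsEdgeColoring (⊤ : SimpleGraph β) k fun u v => ce (f u) (f v) :=
  ⟨fun _ _ huv => h.1 _ _ (hf.ne huv),
    fun _ _ _ huv huw hvw => h.2 _ _ _ (hf.ne huv) (hf.ne huw) (hf.ne hvw)⟩

theorem exists_isEdgeColoring_top_of_even {n : ℕ} (hn : Even n) :
    ∃ ce, IsEdgeColoring (⊤ : SimpleGraph (Fin n)) (n - 1) ce := by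
  rcases Nat.eq_zero_or_pos n with rfl | hpos
  · exact ⟨fun u => u.elim0, fun u => u.elim0, fun u => u.elim0⟩
  have hq : Odd (n - 1) := by obtain ⟨r, hr⟩ := hn; exact ⟨r - 1, by omega⟩
  have : NeZero (n - 1) := ⟨hq.pos.ne'⟩
  let e : Fin n ≃ Option (ZMod (n - 1)) := Fintype.equivOfCardEq (by simp [ZMod.card]; omega)
  exact ⟨_, (isEdgeColoring_roundRobin hq).top_comp e.injective⟩

section ProductColoring

variable {k m : ℕ}

/-- Colour `x` of class `c`. Class `0` uses all `m` values of `x`, every other class only the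
`m - 1` values `x ≠ 0`; the code `c (m - 1) + x` packs these into `k (m - 1) + 1` colours. -/
def classColor (c : Fin k) (x : Fin m) : Fin (k * (m - 1) + 1) :=
  ⟨c * (m - 1) + x, by
    have hc : (c : ℕ) + 1 ≤ k := c.isLt
    have hx : (x : ℕ) ≤ m - 1 := by have := x.isLt; omega
    calc (c : ℕ) * (m - 1) + x ≤ (c + 1) * (m - 1) := by rw [add_one_mul]; omega
      _ ≤ k * (m - 1) := Nat.mul_le_mul_right _ hc
      _ < k * (m - 1) + 1 := Nat.lt_succ_self _⟩

theorem classColor_lt_classColor {c c' : Fin k} (hc : c < c') (x : Fin m) {x' : Fin m}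
    (hx' : (x' : ℕ) ≠ 0) : classColor c x < classColor c' x' := by
  have hx : (x : ℕ) ≤ m - 1 := by have := x.isLt; omega
  show (c : ℕ) * (m - 1) + x < c' * (m - 1) + x'
  calc (c : ℕ) * (m - 1) + x ≤ (c + 1) * (m - 1) := by rw [add_one_mul]; omega
    _ ≤ c' * (m - 1) := Nat.mul_le_mul_right _ hc
    _ < c' * (m - 1) + x' := by omega

theorem classColor_injective (c : Fin k) : Injective (classColor (m := m) c) :=
  fun x x' h => Fin.ext (by simpa [classColor] using h)

theorem classColor_inj [NeZero k] [NeZero m] {c c' : Fin k} {x x' : Fin m}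
    (hx : c = 0 ∨ x ≠ 0) (hx' : c' = 0 ∨ x' ≠ 0) (h : classColor c x = classColor c' x') :
    c = c' ∧ x = x' := by
  rcases lt_trichotomy c c' with hlt | rfl | hlt
  · have : x' ≠ 0 := hx'.resolve_left (ne_bot_of_gt hlt)
    exact absurd h (classColor_lt_classColor hlt x (Fin.val_ne_zero_iff.2 this)).ne
  · exact ⟨rfl, classColor_injective c h⟩
  · have : x ≠ 0 := hx.resolve_left (ne_bot_of_gt hlt)
    exact absurd h (classColor_lt_classColor hlt x' (Fin.val_ne_zero_iff.2 this)).ne'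

/-- Orienting the edges `i j` of the base graph lets a non-symmetric square `S` colour the edge
`(i, a) (j, b)` of a product consistently from both ends. -/
def orient {β γ : Type*} [LinearOrder V] (S : β → β → γ) (i j : V) (a b : β) : γ :=
  if i < j then S a b else S b a

section Orient

variable {β γ : Type*} [LinearOrder V] {S : β → β → γ} {i j : V} {a b : β}

theorem orient_swap (hij : i ≠ j) : orient S j i b a = orient S i j a b := by
  rcases hij.lt_or_gt with h | h <;> simp [orient, h, h.not_gt]

theorem orient_eq_or : orient S i j a b = S a b ∨ orient S i j a b = S b a := by
  unfold orient; split_ifs <;> simp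

theorem IsLatinSquare.orient_injective {L : β → β → β} (hL : IsLatinSquare L) (i j : V) (a : β) :
    Injective (orient L i j a) := by
  unfold orient; split_ifs
  exacts [hL.injective_right a, hL.injective_left a]

theorem IsLatinSquare.orient_ne {L : β → β → β} (hL : IsLatinSquare L) (hL₀ : ∀ a, L a a = a)
    (i j : V) (hab : a ≠ b) : orient L i j a b ≠ a ∧ orient L i j a b ≠ b := by
  rcases orient_eq_or (S := L) (i := i) (j := j) (a := a) (b := b) with h | h <;> rw [h]
  exacts [hL.ne_of_idempotent hL₀ hab, (hL.ne_of_idempotent hL₀ hab.symm).symm]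

end Orient

variable [NeZero k] [NeZero m] [LinearOrder V]

def classSquare (L : Fin m → Fin m → Fin m) (c : Fin k) : Fin m → Fin m → Fin m :=
  if c = 0 then L else fun a b => a - b

theorem isLatinSquare_classSquare {L : Fin m → Fin m → Fin m} (hL : IsLatinSquare L) (c : Fin k) :
    IsLatinSquare (classSquare L c) := by
  unfold classSquare; split_ifs
  exacts [hL, isLatinSquare_sub]

theorem orient_classSquare_ne_zero (L : Fin m → Fin m → Fin m) {c : Fin k} (hc : c ≠ 0)
    (i j : V) {a b : Fin m} (hab : a ≠ b) : orient (classSquare L c) i j a b ≠ 0 := by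
  rw [classSquare, if_neg hc]
  rcases orient_eq_or (S := fun a b : Fin m => a - b) (i := i) (j := j) (a := a) (b := b)
    with h | h <;> rw [h, sub_ne_zero]
  exacts [hab, hab.symm]

def productVertexColor (v : V × Fin m) : Fin (k * (m - 1) + 1) := classColor 0 v.2

def productEdgeColor (ce : V → V → Fin k) (L : Fin m → Fin m → Fin m) (u v : V × Fin m) :
    Fin (k * (m - 1) + 1) :=
  classColor (ce u.1 v.1) (orient (classSquare L (ce u.1 v.1)) u.1 v.1 u.2 v.2)

theorem isTotalColoring_tensorProd_top {G : SimpleGraph V} {ce : V → V → Fin k}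
    (hce : IsEdgeColoring G k ce) {L : Fin m → Fin m → Fin m} (hL : IsLatinSquare L)
    (hL₀ : ∀ a, L a a = a) :
    IsTotalColoring (tensorProd G ⊤) (k * (m - 1) + 1) productVertexColor
      (productEdgeColor ce L) := by
  have admissible {i j : V} {a b : Fin m} (hab : a ≠ b) :
      ce i j = 0 ∨ orient (classSquare L (ce i j)) i j a b ≠ 0 :=
    or_iff_not_imp_left.2 fun hc => orient_classSquare_ne_zero L hc i j hab
  refine ⟨?_, ?_, ?_, ?_⟩
  · rintro ⟨i, a⟩ ⟨j, b⟩ ⟨hij, -⟩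
    simp only [productEdgeColor, hce.1 i j hij, orient_swap hij.ne]
  · rintro ⟨i, a⟩ ⟨j, b⟩ ⟨-, hab⟩ h
    exact hab (classColor_injective 0 h)
  · rintro ⟨i, a⟩ ⟨j, b⟩ ⟨j', b'⟩ ⟨hij, hab⟩ ⟨hij', hab'⟩ hne h
    obtain ⟨hc, hx⟩ := classColor_inj (admissible hab) (admissible hab') h
    obtain rfl : j = j' := by_contra fun hjj => hce.2 i j j' hij hij' hjj hc
    exact hne (Prod.ext rfl ((isLatinSquare_classSquare hL _).orient_injective i j a hx))
  · rintro ⟨i, a⟩ ⟨j, b⟩ ⟨hij, hab⟩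
    by_cases hc : ce i j = 0
    · obtain ⟨ha, hb⟩ := hL.orient_ne hL₀ i j hab
      simp only [productEdgeColor, productVertexColor, hc, classSquare, if_true]
      exact ⟨fun h => ha (classColor_injective 0 h), fun h => hb (classColor_injective 0 h)⟩
    · exact ⟨fun h => hc (classColor_inj (admissible hab) (Or.inl rfl) h).1,
        fun h => hc (classColor_inj (admissible hab) (Or.inl rfl) h).1⟩

end ProductColoring

theorem IsTotalColoring.degree_lt {G : SimpleGraph V} {N : ℕ} {cv : V → Fin N}
    {ce : V → V → Fin N} (h : IsTotalColoring G N cv ce) (v : V) [Fintype (G.neighborSet v)] :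
    G.degree v < N := by
  let f : Option (G.neighborSet v) → Fin N := fun o => o.elim (cv v) fun w => ce v w
  have hf : Injective f := by
    rintro (_ | ⟨w, hw⟩) (_ | ⟨w', hw'⟩) hww'
    · rfl
    · exact absurd hww'.symm (h.2.2.2 v w' hw').1
    · exact absurd hww' (h.2.2.2 v w hw).1
    · by_contra hne
      exact h.2.2.1 v w w' hw hw' (fun e => hne (by subst e; rfl)) hww'
  have := Fintype.card_le_of_injective f hf
  rwa [Fintype.card_option, card_neighborSet_eq_degree, Fintype.card_fin, Nat.succ_le_iff] at this

theorem tensorProd_degree [Fintype V] [Fintype W] (G : SimpleGraph V) (H : SimpleGraph W)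
    [DecidableRel G.Adj] [DecidableRel H.Adj] (v : V) (w : W) :
    (tensorProd G H).degree (v, w) = G.degree v * H.degree w := by
  rw [← card_neighborFinset_eq_degree, ← card_neighborFinset_eq_degree,
    ← card_neighborFinset_eq_degree, ← Finset.card_product]
  congr 1
  ext ⟨v', w'⟩
  simp only [mem_neighborFinset, Finset.mem_product]
  rfl

theorem Kn_tensor_Km_typeI_even_left (n m : ℕ) (hn : 3 ≤ n) (hne : Even n) (hm : 3 ≤ m) :
    totalChromaticNumber (tensorProd (⊤ : SimpleGraph (Fin n)) (⊤ : SimpleGraph (Fin m))) =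
      (n - 1) * (m - 1) + 1 := by
  have : NeZero (n - 1) := ⟨by omega⟩
  have : NeZero m := ⟨by omega⟩
  obtain ⟨ce, hce⟩ := exists_isEdgeColoring_top_of_even hne
  obtain ⟨L, hL, hL₀⟩ := exists_idempotent_isLatinSquare (α := Fin m) (by simpa using hm)
  have hmem : (n - 1) * (m - 1) + 1 ∈ {N | ∃ cv ce, IsTotalColoring
      (tensorProd (⊤ : SimpleGraph (Fin n)) (⊤ : SimpleGraph (Fin m))) N cv ce} :=
    ⟨_, _, isTotalColoring_tensorProd_top hce hL hL₀⟩
  refine le_antisymm (Nat.sInf_le hmem) (le_csInf ⟨_, hmem⟩ ?_)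
  rintro N ⟨cv, ce', h⟩
  have hdeg := h.degree_lt (⟨0, by omega⟩, 0)
  rw [tensorProd_degree] at hdeg
  simpa using hdeg
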